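/- Let v₁, …, vₙ be 1-Lipschitz valuation functions, and let v'_1, …, v'_{n+1} be defined from them by the lifting construction: v'_i(a,b) = (1/3)·v_i(min(2a,1), min(2b,1)) + (2/3)·φ(|[a,b] ∩ [1/2,1]|) for i ∈ {1,…,n}, and v'_{n+1}(a,b) = (2/3)·φ(|[a,b] ∩ [1/2,1]|), where φ(t) = 0 for t ≤ 1/3 and φ(t) = 6(t − 1/3) for 1/3 ≤ t ≤ 1/2. Then each v'_i (i ∈ {1,…,n+1}) is a 5-Lipschitz valuation function, and if each v_i is monotone then each v'_i is monotone. -/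
import Mathlib


open Set

/-- A valuation function on the cake `[0,1]`. -/
def IsValuation (v : ℝ → ℝ → ℝ) : Prop :=
  ContinuousOn (fun p : ℝ × ℝ => v p.1 p.2) (Icc 0 1 ×ˢ Icc 0 1) ∧
  (∀ a ∈ Icc (0:ℝ) 1, ∀ b ∈ Icc (0:ℝ) 1, v a b ∈ Icc (0:ℝ) 1) ∧
  (∀ a ∈ Icc (0:ℝ) 1, ∀ b ∈ Icc (0:ℝ) 1, b ≤ a → v a b = 0)

/-- Monotonicity of a valuation. -/
def MonotoneVal (v : ℝ → ℝ → ℝ) : Prop :=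
  ∀ a' a b b' : ℝ, 0 ≤ a' → a' ≤ a → a ≤ b → b ≤ b' → b' ≤ 1 → v a b ≤ v a' b'

/-- `L`-Lipschitz continuity of a valuation on `[0,1]²`. -/
def LipschitzVal (L : ℝ) (v : ℝ → ℝ → ℝ) : Prop :=
  ∀ a b a' b' : ℝ, a ∈ Icc (0:ℝ) 1 → b ∈ Icc (0:ℝ) 1 → a' ∈ Icc (0:ℝ) 1 → b' ∈ Icc (0:ℝ) 1 →
    |v a b - v a' b'| ≤ L * (|a - a'| + |b - b'|)

/-- The function `φ` of the lifting construction: `φ(t) = 0` for `t ≤ 1/3`,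
and `φ(t) = 6(t - 1/3)` otherwise. -/
noncomputable def phi (t : ℝ) : ℝ := if t ≤ 1 / 3 then 0 else 6 * (t - 1 / 3)

/-- The length of `[a,b] ∩ [1/2,1]`. -/
noncomputable def interLen (a b : ℝ) : ℝ := max 0 (min b 1 - max a (1 / 2))

/-- The lifted valuation of one of the original `n` agents. -/
noncomputable def liftVal (v : ℝ → ℝ → ℝ) (a b : ℝ) : ℝ :=
  (1 / 3) * v (min (2 * a) 1) (min (2 * b) 1) + (2 / 3) * phi (interLen a b)

/-- The lifted valuation of the extra `(n+1)`-st agent. -/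
noncomputable def liftLast (a b : ℝ) : ℝ := (2 / 3) * phi (interLen a b)

/-- The family of `n+1` lifted valuations. -/
noncomputable def liftFam (n : ℕ) (v : Fin n → ℝ → ℝ → ℝ) :
    Fin (n + 1) → ℝ → ℝ → ℝ :=
  fun i => if h : (i : ℕ) < n then liftVal (v ⟨i, h⟩) else liftLast

/- ### Auxiliary lemmas -/

lemma abs_min_sub_min_le_abs' (a b c : ℝ) : |min a c - min b c| ≤ |a - b| := by
  have h3 := le_abs_self (a - b)
  have h4 := neg_abs_le (a - b)
  rw [abs_le, min_def, min_def]
  constructor <;> split_ifs <;> linarith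

lemma abs_max_sub_max_le_abs' (a b c : ℝ) : |max a c - max b c| ≤ |a - b| := by
  have h3 := le_abs_self (a - b)
  have h4 := neg_abs_le (a - b)
  rw [abs_le, max_def, max_def]
  constructor <;> split_ifs <;> linarith

lemma phi_nonneg (t : ℝ) : 0 ≤ phi t := by
  unfold phi; split_ifs with h <;> linarith

lemma phi_le_one {t : ℝ} (h : t ≤ 1 / 2) : phi t ≤ 1 := by
  unfold phi; split_ifs with h' <;> linarith

lemma phi_of_nonpos {t : ℝ} (h : t ≤ 0) : phi t = 0 := by
  unfold phi; rw [if_pos (by linarith)]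

lemma phi_mono {s t : ℝ} (h : s ≤ t) : phi s ≤ phi t := by
  unfold phi; split_ifs <;> linarith

lemma phi_lip (s t : ℝ) : |phi s - phi t| ≤ 6 * |s - t| := by
  have h3 := le_abs_self (s - t)
  have h4 := neg_abs_le (s - t)
  unfold phi
  split_ifs <;> rw [abs_le] <;> constructor <;> linarith

lemma interLen_nonneg (a b : ℝ) : 0 ≤ interLen a b := le_max_left _ _

lemma interLen_le_half (a b : ℝ) : interLen a b ≤ 1 / 2 := by
  unfold interLen
  have h1 : min b 1 ≤ 1 := min_le_right _ _
  have h2 : (1 / 2 : ℝ) ≤ max a (1 / 2) := le_max_right _ _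
  exact max_le (by norm_num) (by linarith)

lemma interLen_zero {a b : ℝ} (h : b ≤ a) : interLen a b = 0 := by
  unfold interLen
  have h1 : min b 1 ≤ b := min_le_left _ _
  have h2 : a ≤ max a (1 / 2) := le_max_left _ _
  exact max_eq_left (by linarith)

lemma interLen_mono {a' a b b' : ℝ} (ha : a' ≤ a) (hb : b ≤ b') :
    interLen a b ≤ interLen a' b' := by
  unfold interLen
  have h1 : min b 1 ≤ min b' 1 := min_le_min hb le_rfl
  have h2 : max a' (1 / 2) ≤ max a (1 / 2) := max_le_max ha le_rfl
  exact max_le_max le_rfl (by linarith)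

lemma interLen_lip (a b a' b' : ℝ) :
    |interLen a b - interLen a' b'| ≤ |a - a'| + |b - b'| := by
  have h1 : |interLen a b - interLen a' b'| ≤
      |(min b 1 - max a (1 / 2)) - (min b' 1 - max a' (1 / 2))| := by
    have := abs_max_sub_max_le_abs' (min b 1 - max a (1 / 2))
      (min b' 1 - max a' (1 / 2)) 0
    unfold interLen
    simpa [max_comm] using this
  have h2 : |(min b 1 - max a (1 / 2)) - (min b' 1 - max a' (1 / 2))| ≤
      |min b 1 - min b' 1| + |max a (1 / 2) - max a' (1 / 2)| := by
    have := abs_sub (min b 1 - min b' 1) (max a (1 / 2) - max a' (1 / 2))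
    calc |(min b 1 - max a (1 / 2)) - (min b' 1 - max a' (1 / 2))|
        = |(min b 1 - min b' 1) - (max a (1 / 2) - max a' (1 / 2))| := by ring_nf
      _ ≤ _ := abs_sub _ _
  have h3 := abs_min_sub_min_le_abs' b b' 1
  have h4 := abs_max_sub_max_le_abs' a a' (1 / 2 : ℝ)
  linarith

lemma liftLast_lip4 (a b a' b' : ℝ) :
    |liftLast a b - liftLast a' b'| ≤ 4 * (|a - a'| + |b - b'|) := by
  unfold liftLast
  have h1 := phi_lip (interLen a b) (interLen a' b')
  have h2 := interLen_lip a b a' b'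
  calc |2 / 3 * phi (interLen a b) - 2 / 3 * phi (interLen a' b')|
      = (2 / 3) * |phi (interLen a b) - phi (interLen a' b')| := by
        rw [show (2/3:ℝ) * phi (interLen a b) - 2 / 3 * phi (interLen a' b') =
          2/3 * (phi (interLen a b) - phi (interLen a' b')) by ring, abs_mul,
          abs_of_nonneg (by norm_num : (0:ℝ) ≤ 2/3)]
    _ ≤ 4 * (|a - a'| + |b - b'|) := by linarith

lemma liftLast_mem (a b : ℝ) : liftLast a b ∈ Icc (0:ℝ) 1 := by
  have h1 := phi_nonneg (interLen a b)
  have h2 := phi_le_one (interLen_le_half a b)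
  constructor <;> (unfold liftLast; linarith)

lemma liftLast_zero {a b : ℝ} (h : b ≤ a) : liftLast a b = 0 := by
  unfold liftLast
  rw [interLen_zero h, phi_of_nonpos le_rfl, mul_zero]

lemma liftLast_mono : MonotoneVal liftLast := by
  intro a' a b b' _ ha hab hb _
  unfold liftLast
  have := phi_mono (interLen_mono ha hb)
  linarith

/-- A `L`-Lipschitz valuation (with `0 ≤ L`) is continuous on the square. -/
lemma lipschitzVal_continuousOn {L : ℝ} (hL : 0 ≤ L) {f : ℝ → ℝ → ℝ}
    (h : LipschitzVal L f) :
    ContinuousOn (fun p : ℝ × ℝ => f p.1 p.2) (Icc 0 1 ×ˢ Icc 0 1) := by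
  have : LipschitzOnWith (2 * L).toNNReal (fun p : ℝ × ℝ => f p.1 p.2)
      (Icc 0 1 ×ˢ Icc 0 1) := by
    apply LipschitzOnWith.of_dist_le_mul
    rintro ⟨x1, x2⟩ ⟨hx1, hx2⟩ ⟨y1, y2⟩ ⟨hy1, hy2⟩
    have hb := h x1 x2 y1 y2 hx1 hx2 hy1 hy2
    rw [Real.dist_eq, Prod.dist_eq, Real.dist_eq, Real.dist_eq]
    have hcoe : ((2 * L).toNNReal : ℝ) = 2 * L := Real.coe_toNNReal _ (by linarith)
    rw [hcoe]
    have h1 : |x1 - y1| ≤ max |x1 - y1| |x2 - y2| := le_max_left _ _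
    have h2 : |x2 - y2| ≤ max |x1 - y1| |x2 - y2| := le_max_right _ _
    nlinarith
  exact this.continuousOn

lemma liftVal_lip5 {f : ℝ → ℝ → ℝ} (hf : LipschitzVal 1 f) :
    LipschitzVal 5 (liftVal f) := by
  intro a b a' b' ha hb ha' hb'
  have hm : ∀ x : ℝ, x ∈ Icc (0:ℝ) 1 → min (2 * x) 1 ∈ Icc (0:ℝ) 1 := by
    intro x hx
    exact ⟨le_min (by linarith [hx.1]) (by norm_num), min_le_right _ _⟩
  have hv := hf (min (2 * a) 1) (min (2 * b) 1) (min (2 * a') 1) (min (2 * b') 1)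
    (hm a ha) (hm b hb) (hm a' ha') (hm b' hb')
  have h1 : |min (2 * a) 1 - min (2 * a') 1| ≤ 2 * |a - a'| := by
    have := abs_min_sub_min_le_abs' (2 * a) (2 * a') 1
    calc |min (2 * a) 1 - min (2 * a') 1| ≤ |2 * a - 2 * a'| := this
      _ = 2 * |a - a'| := by
          rw [show (2:ℝ) * a - 2 * a' = 2 * (a - a') by ring, abs_mul, abs_two]
  have h2 : |min (2 * b) 1 - min (2 * b') 1| ≤ 2 * |b - b'| := by
    have := abs_min_sub_min_le_abs' (2 * b) (2 * b') 1
    calc |min (2 * b) 1 - min (2 * b') 1| ≤ |2 * b - 2 * b'| := this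
      _ = 2 * |b - b'| := by
          rw [show (2:ℝ) * b - 2 * b' = 2 * (b - b') by ring, abs_mul, abs_two]
  have h3 := liftLast_lip4 a b a' b'
  unfold liftVal
  have key : liftVal f a b - liftVal f a' b' =
      (1 / 3) * (f (min (2 * a) 1) (min (2 * b) 1) - f (min (2 * a') 1) (min (2 * b') 1))
      + (liftLast a b - liftLast a' b') := by
    unfold liftVal liftLast; ring
  calc |(1 / 3) * f (min (2 * a) 1) (min (2 * b) 1) + 2 / 3 * phi (interLen a b) -
        ((1 / 3) * f (min (2 * a') 1) (min (2 * b') 1) + 2 / 3 * phi (interLen a' b'))|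
      ≤ (1 / 3) * |f (min (2 * a) 1) (min (2 * b) 1) - f (min (2 * a') 1) (min (2 * b') 1)|
        + |liftLast a b - liftLast a' b'| := by
        have := abs_add_le
          ((1 / 3) * (f (min (2 * a) 1) (min (2 * b) 1) - f (min (2 * a') 1) (min (2 * b') 1)))
          (liftLast a b - liftLast a' b')
        rw [abs_mul, abs_of_nonneg (by norm_num : (0:ℝ) ≤ 1/3)] at this
        calc _ = |(1 / 3) * (f (min (2 * a) 1) (min (2 * b) 1) -
              f (min (2 * a') 1) (min (2 * b') 1)) + (liftLast a b - liftLast a' b')| := by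
              unfold liftLast; ring_nf
          _ ≤ _ := this
    _ ≤ 5 * (|a - a'| + |b - b'|) := by
        have hab := abs_nonneg (a - a')
        have hbb := abs_nonneg (b - b')
        nlinarith

lemma liftVal_isValuation {f : ℝ → ℝ → ℝ} (hf : IsValuation f) (hl : LipschitzVal 1 f) :
    IsValuation (liftVal f) := by
  obtain ⟨_, hmem, hzero⟩ := hf
  have hm : ∀ x : ℝ, x ∈ Icc (0:ℝ) 1 → min (2 * x) 1 ∈ Icc (0:ℝ) 1 := by
    intro x hx
    exact ⟨le_min (by linarith [hx.1]) (by norm_num), min_le_right _ _⟩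
  refine ⟨lipschitzVal_continuousOn (by norm_num) (liftVal_lip5 hl), ?_, ?_⟩
  · intro a ha b hb
    have h1 := hmem _ (hm a ha) _ (hm b hb)
    have h2 := phi_nonneg (interLen a b)
    have h3 := phi_le_one (interLen_le_half a b)
    unfold liftVal
    constructor
    · nlinarith [h1.1]
    · nlinarith [h1.2]
  · intro a ha b hb hba
    have h1 := hzero _ (hm a ha) _ (hm b hb) (min_le_min (by linarith) le_rfl)
    unfold liftVal
    rw [h1, interLen_zero hba, phi_of_nonpos le_rfl]
    ring

lemma liftVal_mono {f : ℝ → ℝ → ℝ} (hf : MonotoneVal f) : MonotoneVal (liftVal f) := by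
  intro a' a b b' ha' haa hab hbb hb'
  unfold liftVal
  have h1 : f (min (2 * a) 1) (min (2 * b) 1) ≤ f (min (2 * a') 1) (min (2 * b') 1) := by
    apply hf
    · exact le_min (by linarith) (by norm_num)
    · exact min_le_min (by linarith) le_rfl
    · exact min_le_min (by linarith) le_rfl
    · exact min_le_min (by linarith) le_rfl
    · exact min_le_right _ _
  have h2 := phi_mono (interLen_mono haa hbb)
  linarith

/-- the lifted valuations are 5-Lipschitz valuation functions, and are
monotone whenever the original valuations are monotone. -/
theorem liftFam_valuation_lipschitz_monotone (n : ℕ) (v : Fin n → ℝ → ℝ → ℝ)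
    (hval : ∀ i, IsValuation (v i)) (hlip : ∀ i, LipschitzVal 1 (v i)) :
    (∀ i : Fin (n + 1), IsValuation (liftFam n v i) ∧ LipschitzVal 5 (liftFam n v i)) ∧
    ((∀ i, MonotoneVal (v i)) → ∀ i : Fin (n + 1), MonotoneVal (liftFam n v i)) := by
  have hlast_lip : LipschitzVal 5 liftLast := by
    intro a b a' b' _ _ _ _
    have h := liftLast_lip4 a b a' b'
    have hab := abs_nonneg (a - a')
    have hbb := abs_nonneg (b - b')
    linarith
  have hlast_val : IsValuation liftLast :=
    ⟨lipschitzVal_continuousOn (by norm_num) hlast_lip,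
      fun a _ b _ => liftLast_mem a b, fun a _ b _ h => liftLast_zero h⟩
  constructor
  · intro i
    unfold liftFam
    split_ifs with h
    · exact ⟨liftVal_isValuation (hval _) (hlip _), liftVal_lip5 (hlip _)⟩
    · exact ⟨hlast_val, hlast_lip⟩
  · intro hmono i
    unfold liftFam
    split_ifs with h
    · exact liftVal_mono (hmono _)
    · exact liftLast_mono
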